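/- arXiv:0705.3045 — 2 statements merged into one kernel-verified Lean document; each statement's English description precedes it below -/
import Mathlib

section
/- Let s, r ≥ 0 and t ∈ ℝ with t ≤ min(s, r) and s + r − t > 1/2. Then the convolution map is continuous as a map h^{−t} × h^s → h^{−r}, i.e., there is C > 0 such that ‖a*b‖_{h^{−r}} ≤ C‖a‖_{h^{−t}}‖b‖_{h^s} for all a ∈ h^{−t}, b ∈ h^s. -/
/- STATEMENT 1 (Convolution lemma, part I(b)):
For s, r ≥ 0, t ≤ min(s,r), s + r − t > 1/2, the convolution map
is continuous as a map h^{−t} × h^s → h^{−r}: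
‖a*b‖_{h^{−r}} ≤ C ‖a‖_{h^{−t}} ‖b‖_{h^s}. -/

noncomputable section

def conv (a b : ℤ → ℂ) (k : ℤ) : ℂ := ∑' j : ℤ, a (k - j) * b j

def memh (s : ℝ) (a : ℤ → ℂ) : Prop :=
  Summable fun k : ℤ => ((1 + |k| : ℝ)) ^ (2 * s) * ‖a k‖ ^ 2

def hnorm (s : ℝ) (a : ℤ → ℂ) : ℝ :=
  (∑' k : ℤ, ((1 + |k| : ℝ)) ^ (2 * s) * ‖a k‖ ^ 2) ^ ((1 : ℝ) / 2)


/-! Write `⟨k⟩ = 1 + |k|` and `σ = t - s - r`. Since `⟨k - j⟩, ⟨j⟩, ⟨k⟩` satisfy the triangle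
inequality, `⟨k - j⟩^t ⟨j⟩^(-s) ⟨k⟩^(-r) ≤ 2^|t| (⟨k - j⟩^σ + ⟨j⟩^σ + ⟨k⟩^σ)`: if `⟨k - j⟩` is the
smallest weight, replace the other two by it; otherwise the two larger weights agree up to a
factor `2`, and `t ≤ min s r` moves all the decay onto the smallest one.
As `2σ < -1`, `u = ⟨·⟩^σ` is in `ℓ²`. With `A = ⟨·⟩^(-t) |a|` and `B = ⟨·⟩^s |b|` in `ℓ²`, the
terms `u (k - j) + u j` have `ℓ²`-norm in `j` bounded uniformly in `k`, so Cauchy–Schwarz in `j`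
and summation over `k` bound them by `‖u‖ ‖A‖ ‖B‖`; the term `u k` multiplies
`∑ j, A (k - j) B j ≤ ‖A‖ ‖B‖`.
All sums are taken in `ℝ≥0∞`, where they always exist, and translated back at the end. -/

open scoped ENNReal

section Shift

variable {G α : Type*} [AddGroup G] [AddCommMonoid α] [TopologicalSpace α]

theorem tsum_comp_sub_left (f : G → α) (k : G) : ∑' j, f (k - j) = ∑' i, f i :=
  (Equiv.subLeft k).tsum_eq f

theorem tsum_comp_sub_right (f : G → α) (j : G) : ∑' k, f (k - j) = ∑' i, f i :=
  (Equiv.subRight j).tsum_eq f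

end Shift

namespace ENNReal

theorem tsum_mul_sq_le_sq_mul_sq {ι : Type*} (f g : ι → ℝ≥0∞) :
    (∑' i, f i * g i) ^ 2 ≤ (∑' i, f i ^ 2) * ∑' i, g i ^ 2 := by
  let _ : MeasurableSpace ι := ⊤
  have h := ENNReal.lintegral_mul_le_Lp_mul_Lq MeasureTheory.Measure.count
    Real.HolderConjugate.two_two (measurable_from_top (f := f)).aemeasurable (measurable_from_top (f := g)).aemeasurable
  simp only [MeasureTheory.lintegral_count, Pi.mul_apply, ENNReal.rpow_two] at h
  calc (∑' i, f i * g i) ^ 2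
      ≤ ((∑' i, f i ^ 2) ^ (1 / 2 : ℝ) * (∑' i, g i ^ 2) ^ (1 / 2 : ℝ)) ^ 2 := by gcongr
    _ = (∑' i, f i ^ 2) * ∑' i, g i ^ 2 := by
      rw [mul_pow, ← ENNReal.rpow_mul_natCast, ← ENNReal.rpow_mul_natCast]
      norm_num

theorem add_sq_le (a b : ℝ≥0∞) : (a + b) ^ 2 ≤ 2 * (a ^ 2 + b ^ 2) := by
  have h := ENNReal.rpow_add_le_mul_rpow_add_rpow a b one_le_two
  norm_num [ENNReal.rpow_two] at h
  exact h

variable {G : Type*} [AddGroup G]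

theorem tsum_tsum_sub_mul (f g : G → ℝ≥0∞) :
    ∑' k, ∑' j, f (k - j) * g j = (∑' i, f i) * ∑' j, g j := by
  rw [ENNReal.tsum_comm, ← ENNReal.tsum_mul_left]
  refine tsum_congr fun j => ?_
  rw [ENNReal.tsum_mul_right, tsum_comp_sub_right f j]

theorem sq_tsum_sub_mul_le (f g : G → ℝ≥0∞) (k : G) :
    (∑' j, f (k - j) * g j) ^ 2 ≤ (∑' i, f i ^ 2) * ∑' j, g j ^ 2 := by
  rw [← tsum_comp_sub_left (f · ^ 2) k]
  exact tsum_mul_sq_le_sq_mul_sq (fun j => f (k - j)) g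

theorem sq_tsum_kernel_conv_le (u A B : G → ℝ≥0∞) (k : G) :
    (∑' j, (u (k - j) + u j + u k) * (A (k - j) * B j)) ^ 2
      ≤ 2 * (4 * (∑' i, u i ^ 2) * ∑' j, (A (k - j) * B j) ^ 2
        + u k ^ 2 * ((∑' i, A i ^ 2) * ∑' i, B i ^ 2)) := by
  have hsplit : ∑' j, (u (k - j) + u j + u k) * (A (k - j) * B j)
      = ∑' j, (u (k - j) + u j) * (A (k - j) * B j) + u k * ∑' j, A (k - j) * B j := by
    simp only [add_mul _ (u k), ENNReal.tsum_add, ENNReal.tsum_mul_left]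
  have hv : ∑' j, (u (k - j) + u j) ^ 2 ≤ 4 * ∑' i, u i ^ 2 :=
    calc ∑' j, (u (k - j) + u j) ^ 2 ≤ ∑' j, 2 * (u (k - j) ^ 2 + u j ^ 2) :=
          ENNReal.tsum_le_tsum fun j => add_sq_le _ _
      _ = 4 * ∑' i, u i ^ 2 := by
          rw [ENNReal.tsum_mul_left, ENNReal.tsum_add, tsum_comp_sub_left (u · ^ 2) k]
          ring
  rw [hsplit]
  refine (add_sq_le _ _).trans ?_
  gcongr
  · exact (tsum_mul_sq_le_sq_mul_sq _ _).trans (by gcongr)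
  · rw [mul_pow]
    gcongr
    exact sq_tsum_sub_mul_le A B k

theorem tsum_sq_tsum_kernel_conv_le (u A B : G → ℝ≥0∞) :
    ∑' k, (∑' j, (u (k - j) + u j + u k) * (A (k - j) * B j)) ^ 2
      ≤ 10 * (∑' i, u i ^ 2) * (∑' i, A i ^ 2) * ∑' i, B i ^ 2 := by
  calc ∑' k, (∑' j, (u (k - j) + u j + u k) * (A (k - j) * B j)) ^ 2
      ≤ ∑' k, 2 * (4 * (∑' i, u i ^ 2) * ∑' j, (A (k - j) * B j) ^ 2
        + u k ^ 2 * ((∑' i, A i ^ 2) * ∑' i, B i ^ 2)) :=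
        ENNReal.tsum_le_tsum fun k => sq_tsum_kernel_conv_le u A B k
    _ = 10 * (∑' i, u i ^ 2) * (∑' i, A i ^ 2) * ∑' i, B i ^ 2 := by
        simp only [mul_pow, ENNReal.tsum_mul_left, ENNReal.tsum_add, ENNReal.tsum_mul_right,
          tsum_tsum_sub_mul (A · ^ 2) (B · ^ 2)]
        ring

end ENNReal

namespace Real

theorem rpow_le_two_rpow_abs_mul_rpow {x z : ℝ} (t : ℝ) (hz : 0 < z)
    (hxz : x ≤ 2 * z) (hzx : z ≤ 2 * x) : x ^ t ≤ 2 ^ |t| * z ^ t := by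
  have hx : 0 < x := by linarith
  rcases le_total 0 t with ht | ht
  · rw [abs_of_nonneg ht, ← mul_rpow zero_le_two hz.le]
    gcongr
  · rw [abs_of_nonpos ht]
    calc x ^ t ≤ (z / 2) ^ t := rpow_le_rpow_of_nonpos (by positivity) (by linarith) ht
      _ = 2 ^ (-t) * z ^ t := by
        rw [div_rpow hz.le zero_le_two, rpow_neg zero_le_two]
        ring

theorem rpow_mul_rpow_neg_mul_rpow_neg_le_of_le {x y z s r t : ℝ} (hy : 0 < y)
    (hyx : y ≤ x) (hyz : y ≤ z) (hxz : x ≤ y + z) (hzx : z ≤ x + y) (htr : t ≤ r) :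
    x ^ t * y ^ (-s) * z ^ (-r) ≤ 2 ^ |t| * y ^ (t - s - r) := by
  have hz : 0 < z := hy.trans_le hyz
  calc x ^ t * y ^ (-s) * z ^ (-r)
      ≤ 2 ^ |t| * z ^ t * y ^ (-s) * z ^ (-r) := by
        have hxt := rpow_le_two_rpow_abs_mul_rpow (x := x) t hz (by linarith) (by linarith)
        gcongr
    _ = 2 ^ |t| * y ^ (-s) * z ^ (t - r) := by
        rw [sub_eq_add_neg, rpow_add hz]
        ring
    _ ≤ 2 ^ |t| * y ^ (-s) * y ^ (t - r) := by
        have hzy := rpow_le_rpow_of_nonpos hy hyz (by linarith : t - r ≤ 0)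
        gcongr
    _ = 2 ^ |t| * y ^ (t - s - r) := by
        rw [mul_assoc, ← rpow_add hy]
        ring_nf

theorem rpow_mul_rpow_neg_mul_rpow_neg_le {x y z s r t : ℝ} (hx : 0 < x) (hy : 0 < y)
    (hz : 0 < z) (hxyz : x ≤ y + z) (hyxz : y ≤ x + z) (hzxy : z ≤ x + y)
    (hs : 0 ≤ s) (hr : 0 ≤ r) (hts : t ≤ s) (htr : t ≤ r) :
    x ^ t * y ^ (-s) * z ^ (-r)
      ≤ 2 ^ |t| * (x ^ (t - s - r) + y ^ (t - s - r) + z ^ (t - s - r)) := by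
  have hx_min : x ≤ y → x ≤ z → x ^ t * y ^ (-s) * z ^ (-r) ≤ 2 ^ |t| * x ^ (t - s - r) :=
    fun hxy hxz => calc
      x ^ t * y ^ (-s) * z ^ (-r) ≤ x ^ t * x ^ (-s) * x ^ (-r) := by
        have hys := rpow_le_rpow_of_nonpos hx hxy (neg_nonpos.mpr hs)
        have hzr := rpow_le_rpow_of_nonpos hx hxz (neg_nonpos.mpr hr)
        gcongr
      _ = x ^ (t - s - r) := by rw [← rpow_add hx, ← rpow_add hx]; ring_nf
      _ ≤ 2 ^ |t| * x ^ (t - s - r) :=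
        le_mul_of_one_le_left (by positivity) (one_le_rpow one_le_two (abs_nonneg t))
  have hmin : x ^ t * y ^ (-s) * z ^ (-r) ≤ 2 ^ |t| * x ^ (t - s - r) ∨
      x ^ t * y ^ (-s) * z ^ (-r) ≤ 2 ^ |t| * y ^ (t - s - r) ∨
      x ^ t * y ^ (-s) * z ^ (-r) ≤ 2 ^ |t| * z ^ (t - s - r) := by
    rcases le_total y z with hyz | hzy
    · rcases le_total x y with hxy | hyx
      · exact .inl (hx_min hxy (hxy.trans hyz))
      · exact .inr (.inl (rpow_mul_rpow_neg_mul_rpow_neg_le_of_le hy hyx hyz hxyz hzxy htr))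
    · rcases le_total x z with hxz | hzx
      · exact .inl (hx_min (hxz.trans hzy) hxz)
      · refine .inr (.inr ?_)
        have h := rpow_mul_rpow_neg_mul_rpow_neg_le_of_le (s := r) hz hzx hzy (by linarith)
          (by linarith) hts
        rwa [mul_right_comm, sub_right_comm] at h
  have hxσ := (rpow_pos_of_pos hx (t - s - r)).le
  have hyσ := (rpow_pos_of_pos hy (t - s - r)).le
  have hzσ := (rpow_pos_of_pos hz (t - s - r)).le
  rcases hmin with h | h | h <;> refine h.trans (mul_le_mul_of_nonneg_left ?_ (by positivity)) <;>
    linarith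

end Real

def weight (e : ℝ) (k : ℤ) : ℝ≥0∞ := ENNReal.ofReal ((1 + |k| : ℝ) ^ e)

theorem weight_pos (e : ℝ) (k : ℤ) : 0 < weight e k :=
  ENNReal.ofReal_pos.mpr (by positivity)

theorem weight_mul_weight_neg (e : ℝ) (k : ℤ) : weight e k * weight (-e) k = 1 := by
  rw [weight, weight, ← ENNReal.ofReal_mul (by positivity), ← Real.rpow_add (by positivity),
    add_neg_cancel, Real.rpow_zero, ENNReal.ofReal_one]

theorem weight_sq (e : ℝ) (k : ℤ) : weight e k ^ 2 = weight (2 * e) k := by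
  rw [weight, weight, ← ENNReal.ofReal_pow (by positivity), ← Real.rpow_mul_natCast (by positivity),
    mul_comm]
  norm_num

theorem tsum_weight_ne_top {e : ℝ} (he : e < -1) : ∑' k, weight e k ≠ ∞ := by
  have hnat : Summable fun n : ℕ => (1 + (n : ℝ)) ^ e := by
    simpa [add_comm] using (summable_nat_add_iff 1).mpr (Real.summable_nat_rpow.mpr he)
  refine Summable.tsum_ofReal_ne_top (Summable.of_nat_of_neg ?_ ?_) <;> simpa using hnat

theorem weight_sub_mul_weight_mul_weight_le {s r t : ℝ} (hs : 0 ≤ s) (hr : 0 ≤ r)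
    (hts : t ≤ s) (htr : t ≤ r) (k j : ℤ) :
    weight t (k - j) * weight (-s) j * weight (-r) k
      ≤ ENNReal.ofReal (2 ^ |t|) *
        (weight (t - s - r) (k - j) + weight (t - s - r) j + weight (t - s - r) k) := by
  have h₁ : |(k - j : ℝ)| ≤ |(j : ℝ)| + |(k : ℝ)| := by simpa [add_comm] using abs_sub (k : ℝ) j
  have h₂ : |(j : ℝ)| ≤ |(k - j : ℝ)| + |(k : ℝ)| := by
    simpa [add_comm] using abs_sub (k : ℝ) (k - j)
  have h₃ : |(k : ℝ)| ≤ |(k - j : ℝ)| + |(j : ℝ)| := by simpa using abs_add_le ((k : ℝ) - j) j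
  simp only [weight]
  rw [← ENNReal.ofReal_mul (by positivity), ← ENNReal.ofReal_mul (by positivity),
    ← ENNReal.ofReal_add (by positivity) (by positivity),
    ← ENNReal.ofReal_add (by positivity) (by positivity), ← ENNReal.ofReal_mul (by positivity)]
  refine ENNReal.ofReal_le_ofReal (Real.rpow_mul_rpow_neg_mul_rpow_neg_le (by positivity)
    (by positivity) (by positivity) ?_ ?_ ?_ hs hr hts htr) <;>
  · push_cast
    linarith

def ehnormSq (s : ℝ) (a : ℤ → ℂ) : ℝ≥0∞ := ∑' k, (weight s k * ‖a k‖ₑ) ^ 2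

theorem ofReal_one_add_abs_rpow_mul_norm_sq (s : ℝ) (a : ℤ → ℂ) (k : ℤ) :
    ENNReal.ofReal ((1 + |k| : ℝ) ^ (2 * s) * ‖a k‖ ^ 2) = (weight s k * ‖a k‖ₑ) ^ 2 := by
  rw [ENNReal.ofReal_mul (by positivity), ENNReal.ofReal_pow (norm_nonneg _), ofReal_norm,
    mul_pow, weight_sq, weight]

theorem memh_iff_ehnormSq_ne_top (s : ℝ) (a : ℤ → ℂ) : memh s a ↔ ehnormSq s a ≠ ∞ := by
  simp only [ehnormSq, ← ofReal_one_add_abs_rpow_mul_norm_sq]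
  refine ⟨Summable.tsum_ofReal_ne_top, fun h => (ENNReal.summable_toReal h).congr fun k => ?_⟩
  exact ENNReal.toReal_ofReal (by positivity)

theorem hnorm_eq_toReal_ehnormSq (s : ℝ) (a : ℤ → ℂ) :
    hnorm s a = (ehnormSq s a).toReal ^ (1 / 2 : ℝ) := by
  simp only [hnorm, ehnormSq, ← ofReal_one_add_abs_rpow_mul_norm_sq,
    ENNReal.tsum_toReal_eq fun _ => ENNReal.ofReal_ne_top]
  congr 1
  exact tsum_congr fun k => (ENNReal.toReal_ofReal (by positivity)).symm

theorem weight_mul_enorm_conv_le {s r t : ℝ} (hs : 0 ≤ s) (hr : 0 ≤ r) (hts : t ≤ s)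
    (htr : t ≤ r) (a b : ℤ → ℂ) (k : ℤ) :
    weight (-r) k * ‖conv a b k‖ₑ ≤ ENNReal.ofReal (2 ^ |t|) *
      ∑' j, (weight (t - s - r) (k - j) + weight (t - s - r) j + weight (t - s - r) k) *
        (weight (-t) (k - j) * ‖a (k - j)‖ₑ * (weight s j * ‖b j‖ₑ)) := by
  have hreweight (j : ℤ) : weight (-r) k * (‖a (k - j)‖ₑ * ‖b j‖ₑ)
      = weight t (k - j) * weight (-s) j * weight (-r) k *
        (weight (-t) (k - j) * ‖a (k - j)‖ₑ * (weight s j * ‖b j‖ₑ)) :=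
    calc weight (-r) k * (‖a (k - j)‖ₑ * ‖b j‖ₑ)
        = (weight t (k - j) * weight (-t) (k - j)) * (weight s j * weight (-s) j) *
          (weight (-r) k * (‖a (k - j)‖ₑ * ‖b j‖ₑ)) := by
          rw [weight_mul_weight_neg, weight_mul_weight_neg, one_mul, one_mul]
      _ = _ := by ring
  calc weight (-r) k * ‖conv a b k‖ₑ
      ≤ weight (-r) k * ∑' j, ‖a (k - j)‖ₑ * ‖b j‖ₑ := by
        gcongr
        exact (enorm_tsum_le_tsum_enorm (f := fun j => a (k - j) * b j)).trans_eq
          (tsum_congr fun j => enorm_mul _ _)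
    _ = ∑' j, weight t (k - j) * weight (-s) j * weight (-r) k *
          (weight (-t) (k - j) * ‖a (k - j)‖ₑ * (weight s j * ‖b j‖ₑ)) := by
        rw [← ENNReal.tsum_mul_left]
        exact tsum_congr hreweight
    _ ≤ _ := by
        rw [← ENNReal.tsum_mul_left]
        refine ENNReal.tsum_le_tsum fun j => ?_
        exact (mul_le_mul_left (weight_sub_mul_weight_mul_weight_le hs hr hts htr k j) _).trans_eq
          (mul_assoc _ _ _)

theorem ehnormSq_conv_le {s r t : ℝ} (hs : 0 ≤ s) (hr : 0 ≤ r) (hts : t ≤ s) (htr : t ≤ r)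
    (a b : ℤ → ℂ) :
    ehnormSq (-r) (conv a b) ≤ 10 * ENNReal.ofReal (2 ^ |t|) ^ 2 *
      (∑' k, weight (2 * (t - s - r)) k) * ehnormSq (-t) a * ehnormSq s b := by
  calc ehnormSq (-r) (conv a b)
      ≤ ∑' k, (ENNReal.ofReal (2 ^ |t|) *
          ∑' j, (weight (t - s - r) (k - j) + weight (t - s - r) j + weight (t - s - r) k) *
            (weight (-t) (k - j) * ‖a (k - j)‖ₑ * (weight s j * ‖b j‖ₑ))) ^ 2 :=
        ENNReal.tsum_le_tsum fun k =>
          pow_le_pow_left' (weight_mul_enorm_conv_le hs hr hts htr a b k) 2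
    _ ≤ ENNReal.ofReal (2 ^ |t|) ^ 2 * (10 * (∑' k, weight (t - s - r) k ^ 2) *
          ehnormSq (-t) a * ehnormSq s b) := by
        simp only [mul_pow, ENNReal.tsum_mul_left]
        gcongr
        exact ENNReal.tsum_sq_tsum_kernel_conv_le (weight (t - s - r))
          (fun i => weight (-t) i * ‖a i‖ₑ) (fun i => weight s i * ‖b i‖ₑ)
    _ = _ := by
        simp only [weight_sq]
        ring

theorem convolution_lemma_Ib (s r t : ℝ) (hs : 0 ≤ s) (hr : 0 ≤ r)
    (ht : t ≤ min s r) (hsrt : 1 / 2 < s + r - t) :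
    ∃ C > (0 : ℝ), ∀ a b : ℤ → ℂ, memh (-t) a → memh s b →
      memh (-r) (conv a b) ∧ hnorm (-r) (conv a b) ≤ C * hnorm (-t) a * hnorm s b := by
  obtain ⟨hts, htr⟩ := le_min_iff.mp ht
  set K : ℝ≥0∞ := 10 * ENNReal.ofReal (2 ^ |t|) ^ 2 * ∑' k, weight (2 * (t - s - r)) k
  have hK_ne_top : K ≠ ∞ := by
    have := tsum_weight_ne_top (e := 2 * (t - s - r)) (by linarith)
    finiteness
  have hK_ne_zero : K ≠ 0 := by
    have := ((weight_pos (2 * (t - s - r)) 0).trans_le (ENNReal.le_tsum 0)).ne'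
    have h2 : ENNReal.ofReal (2 ^ |t|) ≠ 0 := (ENNReal.ofReal_pos.mpr (by positivity)).ne'
    simp [K, this, h2]
  have hK_pos : 0 < K.toReal := ENNReal.toReal_pos hK_ne_zero hK_ne_top
  refine ⟨K.toReal ^ (1 / 2 : ℝ), by positivity, fun a b ha hb => ?_⟩
  rw [memh_iff_ehnormSq_ne_top] at ha hb ⊢
  have hconv := ehnormSq_conv_le hs hr hts htr a b
  refine ⟨ne_top_of_le_ne_top (by finiteness) hconv, ?_⟩
  simp only [hnorm_eq_toReal_ehnormSq]
  rw [← Real.mul_rpow (by positivity) (by positivity),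
    ← Real.mul_rpow (by positivity) (by positivity), ← ENNReal.toReal_mul, ← ENNReal.toReal_mul]
  exact Real.rpow_le_rpow ENNReal.toReal_nonneg (ENNReal.toReal_mono (by finiteness) hconv)
    (by norm_num)
end
end

section
/- In terms of Fourier coefficients: let m ∈ ℕ and let (V̂(k))_{k∈ℤ} satisfy Σ_k ⟨k⟩^{−2m}|V̂(k)|² < ∞. Then for every δ > 0 there exists c_δ ≥ 0 such that for all sequences (û(k))_{k∈ℤ} with Σ_k ⟨k⟩^{2m}|û(k)|² < ∞, one has |Σ_{k,j} V̂(k−j) û(j) \overline{û(k)}| ≤ δ Σ_k |k|^{2m}|û(k)|² + c_δ Σ_k |û(k)|². -/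
/-!
Write `|V̂(l)| = w(l) ⟨l⟩^m` with `w ∈ ℓ²`, and the form as `∑_l |V̂(l)| G(l)` with the
autocorrelation `G(l) = ∑_j |û(j)| |û(l + j)| ≤ ‖û‖₂²`. Peetre's inequality
`⟨l⟩ ≤ ⟨j⟩ + ⟨l + j⟩` and Young's inequality put `⟨l⟩^m G(l)` in `ℓ²`, with norm bounded by a
multiple of `Q = ∑_k ⟨k⟩^{2m} |û(k)|²`; this uses `‖û‖₁² ≤ (∑_l ⟨l⟩^{-2m}) Q`, finite as `m ≥ 1`.
So the coefficients of `V̂` outside a finite set `F` contribute at most `‖w 1_{Fᶜ}‖₂` times a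
multiple of `Q`, which is as small as we like, while those in `F` contribute at most
`(∑_{l ∈ F} |V̂(l)|) ‖û‖₂²`. Finally `Q ≤ 2^{2m} (∑_k |k|^{2m} |û(k)|² + ‖û‖₂²)`.
Working in `ℝ≥0∞` removes all summability bookkeeping until the very end.
-/

open scoped ENNReal NNReal
open MeasureTheory

namespace ENNReal

theorem add_pow_le_two_pow_mul (a b : ℝ≥0∞) (n : ℕ) :
    (a + b) ^ n ≤ 2 ^ n * (a ^ n + b ^ n) := by
  simpa only [rpow_natCast] using add_rpow_le_two_rpow_mul_rpow_add_rpow a b n.cast_nonneg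

theorem rpow_half_sq (x : ℝ≥0∞) : (x ^ (1 / 2 : ℝ)) ^ 2 = x := by
  rw [← rpow_natCast, ← rpow_mul]; norm_num

theorem tsum_sq_le_tsum_mul_tsum_of_sq_le_mul {ι : Type*} {r f g : ι → ℝ≥0∞}
    (h : ∀ i, r i ^ 2 ≤ f i * g i) : (∑' i, r i) ^ 2 ≤ (∑' i, f i) * ∑' i, g i := by
  let : MeasurableSpace ι := ⊤
  have hr : ∀ i, r i ≤ f i ^ (1 / 2 : ℝ) * g i ^ (1 / 2 : ℝ) := fun i => by
    rw [← ENNReal.pow_le_pow_left_iff two_ne_zero, mul_pow, rpow_half_sq, rpow_half_sq]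
    exact h i
  have holder := lintegral_mul_le_Lp_mul_Lq Measure.count Real.HolderConjugate.two_two
    (measurable_from_top (f := fun i => f i ^ (1 / 2 : ℝ))).aemeasurable
    (measurable_from_top (f := fun i => g i ^ (1 / 2 : ℝ))).aemeasurable
  simp only [lintegral_count' measurable_from_top, Pi.mul_apply, ← rpow_mul] at holder
  calc (∑' i, r i) ^ 2 ≤ (∑' i, f i ^ (1 / 2 : ℝ) * g i ^ (1 / 2 : ℝ)) ^ 2 := by
        gcongr with i; exact hr i
    _ ≤ ((∑' i, f i) ^ (1 / 2 : ℝ) * (∑' i, g i) ^ (1 / 2 : ℝ)) ^ 2 := by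
        gcongr; simpa using holder
    _ = (∑' i, f i) * ∑' i, g i := by rw [mul_pow, rpow_half_sq, rpow_half_sq]

theorem exists_finset_tsum_indicator_compl_lt {ι : Type*} {f : ι → ℝ≥0∞} (hf : ∑' i, f i ≠ ∞)
    {ε : ℝ≥0∞} (hε : ε ≠ 0) : ∃ s : Finset ι, ∑' i, (↑s : Set ι)ᶜ.indicator f i < ε := by
  obtain ⟨s, hs⟩ :=
    ((tendsto_tsum_compl_atTop_zero hf).eventually_lt_const (pos_iff_ne_zero.2 hε)).exists
  exact ⟨s, by rwa [← tsum_subtype]⟩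

end ENNReal

section Correlation

variable {G : Type*} [AddGroup G]

noncomputable def correlation (f g : G → ℝ≥0∞) (l : G) : ℝ≥0∞ := ∑' j, f j * g (l + j)

theorem correlation_neg (f g : G → ℝ≥0∞) (l : G) : correlation f g (-l) = correlation g f l := by
  rw [correlation, ← (Equiv.addLeft l).tsum_eq]
  simp [correlation, mul_comm]

theorem correlation_sq_le (f g : G → ℝ≥0∞) (l : G) :
    correlation f g l ^ 2 ≤ (∑' j, f j ^ 2) * ∑' j, g j ^ 2 := by
  rw [← (Equiv.addLeft l).tsum_eq (fun j => g j ^ 2)]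
  exact ENNReal.tsum_sq_le_tsum_mul_tsum_of_sq_le_mul fun j => (mul_pow _ _ 2).le

/-- Young's inequality `‖f ⋆ g‖₂ ≤ ‖f‖₂ ‖g‖₁`, squared. -/
theorem tsum_correlation_sq_le (f g : G → ℝ≥0∞) :
    ∑' l, correlation f g l ^ 2 ≤ (∑' j, g j) ^ 2 * ∑' j, f j ^ 2 := by
  have shift_left : ∀ l, ∑' j, g (l + j) = ∑' j, g j := fun l => (Equiv.addLeft l).tsum_eq g
  have shift_right : ∀ j, ∑' l, g (l + j) = ∑' l, g l := fun j => (Equiv.addRight j).tsum_eq g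
  calc ∑' l, correlation f g l ^ 2
      ≤ ∑' l, (∑' j, g (l + j)) * ∑' j, g (l + j) * f j ^ 2 := by
        gcongr with l
        exact ENNReal.tsum_sq_le_tsum_mul_tsum_of_sq_le_mul fun j => le_of_eq (by ring)
    _ = (∑' j, g j) * ∑' j, f j ^ 2 * ∑' l, g (l + j) := by
        simp only [shift_left, ENNReal.tsum_mul_left]
        rw [ENNReal.tsum_comm]
        simp only [mul_comm (g _), ENNReal.tsum_mul_left]
    _ = (∑' j, g j) ^ 2 * ∑' j, f j ^ 2 := by
        simp only [shift_right, ENNReal.tsum_mul_right]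
        ring

theorem tsum_prod_mul_sub_eq_tsum_mul_correlation (a f g : G → ℝ≥0∞) :
    ∑' p : G × G, a (p.1 - p.2) * (f p.2 * g p.1) = ∑' l, a l * correlation f g l := by
  let e : G × G ≃ G × G :=
    { toFun := fun q => (q.1 + q.2, q.2), invFun := fun p => (p.1 - p.2, p.2),
      left_inv := fun q => by simp, right_inv := fun p => by simp }
  rw [← e.tsum_eq]
  simp only [e, Equiv.coe_fn_mk, add_sub_cancel_right]
  rw [ENNReal.tsum_prod (f := fun l j => a l * (f j * g (l + j)))]
  simp only [correlation, ENNReal.tsum_mul_left]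

end Correlation

noncomputable def bracket (k : ℤ) : ℝ≥0∞ := 1 + ‖k‖ₑ

theorem one_le_bracket (k : ℤ) : 1 ≤ bracket k := le_self_add

theorem bracket_ne_top (k : ℤ) : bracket k ≠ ∞ := by simp [bracket]

theorem bracket_ne_zero (k : ℤ) : bracket k ≠ 0 := by simp [bracket]

theorem bracket_le_add (l j : ℤ) : bracket l ≤ bracket j + bracket (l + j) :=
  calc bracket l = 1 + ‖l + j - j‖ₑ := by simp [bracket]
    _ ≤ 1 + (‖l + j‖ₑ + ‖j‖ₑ) := by gcongr; exact enorm_sub_le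
    _ = (1 + ‖j‖ₑ) + ‖l + j‖ₑ := by ring
    _ ≤ bracket j + bracket (l + j) := by rw [bracket, bracket]; gcongr; exact le_add_self

theorem bracket_pow_le (k : ℤ) (n : ℕ) : bracket k ^ n ≤ 2 ^ n * (‖k‖ₑ ^ n + 1) := by
  simpa [bracket, add_comm] using ENNReal.add_pow_le_two_pow_mul 1 ‖k‖ₑ n

theorem ofReal_one_add_abs_rpow (k : ℤ) (x : ℝ) :
    ENNReal.ofReal ((1 + |k| : ℝ) ^ x) = bracket k ^ x := by
  rw [← ENNReal.ofReal_rpow_of_pos (by positivity), bracket, ENNReal.ofReal_add zero_le_one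
    (by positivity), ENNReal.ofReal_one, ← ofReal_norm, Int.norm_eq_abs, Int.cast_abs]

theorem tsum_inv_bracket_pow_sq_ne_top {m : ℕ} (hm : 1 ≤ m) :
    ∑' l, ((bracket l ^ m)⁻¹) ^ 2 ≠ ∞ := by
  have summable : Summable fun n : ℤ => (1 + |n| : ℝ) ^ (-2 : ℝ) := by
    refine (Real.summable_one_div_int_pow.mpr one_lt_two).of_norm_bounded_eventually ?_
    filter_upwards [Filter.eventually_cofinite_ne 0] with n hn
    rw [Real.norm_of_nonneg (by positivity), Real.rpow_neg (by positivity), Real.rpow_two, one_div]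
    refine inv_anti₀ (by positivity) ?_
    rw [← sq_abs, Int.cast_abs]
    gcongr
    exact le_add_of_nonneg_left zero_le_one
  refine ne_top_of_le_ne_top summable.tsum_ofReal_ne_top (ENNReal.tsum_le_tsum fun l => ?_)
  rw [ofReal_one_add_abs_rpow, ENNReal.rpow_neg, ENNReal.rpow_two, ← ENNReal.inv_pow]
  refine ENNReal.inv_le_inv.2 (pow_le_pow_left₀ zero_le ?_ 2)
  exact le_self_pow₀ (one_le_bracket l) (by omega)

section Estimates

variable (m : ℕ) (u : ℤ → ℝ≥0∞)

theorem sq_tsum_le_tsum_inv_bracket_pow_sq_mul :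
    (∑' k, u k) ^ 2 ≤ (∑' k, ((bracket k ^ m)⁻¹) ^ 2) * ∑' k, (bracket k ^ m * u k) ^ 2 :=
  ENNReal.tsum_sq_le_tsum_mul_tsum_of_sq_le_mul fun k => by
    rw [← mul_pow, ← mul_assoc, ENNReal.inv_mul_cancel (pow_ne_zero m (bracket_ne_zero k))
      (ENNReal.pow_ne_top (bracket_ne_top k)), one_mul]

theorem tsum_bracket_pow_mul_sq_le :
    ∑' k, (bracket k ^ m * u k) ^ 2 ≤
      2 ^ (2 * m) * (∑' k, ‖k‖ₑ ^ (2 * m) * u k ^ 2 + ∑' k, u k ^ 2) := by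
  rw [← ENNReal.tsum_add, ← ENNReal.tsum_mul_left]
  refine ENNReal.tsum_le_tsum fun k => ?_
  calc (bracket k ^ m * u k) ^ 2 = bracket k ^ (2 * m) * u k ^ 2 := by ring
    _ ≤ 2 ^ (2 * m) * (‖k‖ₑ ^ (2 * m) + 1) * u k ^ 2 := by gcongr; exact bracket_pow_le k _
    _ = 2 ^ (2 * m) * (‖k‖ₑ ^ (2 * m) * u k ^ 2 + u k ^ 2) := by ring

theorem tsum_sq_le_tsum_bracket_pow_mul_sq :
    ∑' k, u k ^ 2 ≤ ∑' k, (bracket k ^ m * u k) ^ 2 :=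
  ENNReal.tsum_le_tsum fun k => by
    rw [mul_pow]
    exact le_mul_of_one_le_left zero_le (one_le_pow₀ (one_le_pow₀ (one_le_bracket k)))

theorem tsum_enorm_pow_mul_sq_le :
    ∑' k, ‖k‖ₑ ^ (2 * m) * u k ^ 2 ≤ ∑' k, (bracket k ^ m * u k) ^ 2 :=
  ENNReal.tsum_le_tsum fun k => by
    rw [mul_pow, ← pow_mul, mul_comm m]
    gcongr
    exact le_add_self

/-- Peetre's inequality `⟨l⟩ ≤ ⟨j⟩ + ⟨l + j⟩` moves the weight onto one of the two factors. -/
theorem bracket_pow_mul_correlation_le (l : ℤ) :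
    bracket l ^ m * correlation u u l ≤
      2 ^ m * (correlation (fun k => bracket k ^ m * u k) u l +
        correlation (fun k => bracket k ^ m * u k) u (-l)) := by
  rw [correlation_neg, correlation, correlation, correlation, ← ENNReal.tsum_add,
    ← ENNReal.tsum_mul_left, ← ENNReal.tsum_mul_left]
  refine ENNReal.tsum_le_tsum fun j => ?_
  calc bracket l ^ m * (u j * u (l + j))
      ≤ 2 ^ m * (bracket j ^ m + bracket (l + j) ^ m) * (u j * u (l + j)) := by
        gcongr
        exact (pow_le_pow_left₀ zero_le (bracket_le_add l j) m).trans
          (ENNReal.add_pow_le_two_pow_mul _ _ m)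
    _ = _ := by ring

theorem tsum_sq_bracket_pow_mul_correlation_le :
    ∑' l, (bracket l ^ m * correlation u u l) ^ 2 ≤
      2 ^ (2 * m + 3) * (∑' k, ((bracket k ^ m)⁻¹) ^ 2) *
        (∑' k, (bracket k ^ m * u k) ^ 2) ^ 2 := by
  set A := ∑' k, ((bracket k ^ m)⁻¹) ^ 2
  set Q := ∑' k, (bracket k ^ m * u k) ^ 2
  set H := correlation (fun k => bracket k ^ m * u k) u
  have hH : ∑' l, H l ^ 2 ≤ A * Q ^ 2 :=
    calc ∑' l, H l ^ 2 ≤ (∑' k, u k) ^ 2 * Q := tsum_correlation_sq_le _ _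
      _ ≤ A * Q * Q := by gcongr; exact sq_tsum_le_tsum_inv_bracket_pow_sq_mul m u
      _ = A * Q ^ 2 := by ring
  have hneg : ∑' l, H (-l) ^ 2 = ∑' l, H l ^ 2 := (Equiv.neg ℤ).tsum_eq (fun l => H l ^ 2)
  calc ∑' l, (bracket l ^ m * correlation u u l) ^ 2
      ≤ ∑' l, (2 ^ m * (H l + H (-l))) ^ 2 :=
        ENNReal.tsum_le_tsum fun l =>
          pow_le_pow_left₀ zero_le (bracket_pow_mul_correlation_le m u l) 2
    _ ≤ ∑' l, 2 ^ (2 * m) * (2 ^ 2 * (H l ^ 2 + H (-l) ^ 2)) := by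
        gcongr with l
        rw [mul_pow, ← pow_mul, mul_comm m]
        gcongr
        exact ENNReal.add_pow_le_two_pow_mul _ _ 2
    _ = 2 ^ (2 * m + 3) * ∑' l, H l ^ 2 := by
        rw [ENNReal.tsum_mul_left, ENNReal.tsum_mul_left, ENNReal.tsum_add, hneg]
        ring
    _ ≤ 2 ^ (2 * m + 3) * A * Q ^ 2 := by rw [mul_assoc]; gcongr

theorem tsum_mul_correlation_le {v v₀ w : ℤ → ℝ≥0∞} {ε : ℝ≥0∞}
    (hv : ∀ l, v l ≤ v₀ l + w l * bracket l ^ m)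
    (hw : (∑' l, w l ^ 2) * (2 ^ (2 * m + 3) * ∑' k, ((bracket k ^ m)⁻¹) ^ 2) ≤ ε ^ 2) :
    ∑' l, v l * correlation u u l ≤
      (∑' l, v₀ l) * ∑' k, u k ^ 2 + ε * ∑' k, (bracket k ^ m * u k) ^ 2 := by
  have hcorr : ∀ l, correlation u u l ≤ ∑' k, u k ^ 2 := fun l =>
    (ENNReal.pow_le_pow_left_iff two_ne_zero).1 ((correlation_sq_le u u l).trans_eq (sq _).symm)
  have htail : ∑' l, w l * (bracket l ^ m * correlation u u l) ≤
      ε * ∑' k, (bracket k ^ m * u k) ^ 2 := by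
    rw [← ENNReal.pow_le_pow_left_iff two_ne_zero, mul_pow]
    calc (∑' l, w l * (bracket l ^ m * correlation u u l)) ^ 2
        ≤ (∑' l, w l ^ 2) * ∑' l, (bracket l ^ m * correlation u u l) ^ 2 :=
          ENNReal.tsum_sq_le_tsum_mul_tsum_of_sq_le_mul fun l => (mul_pow _ _ 2).le
      _ ≤ (∑' l, w l ^ 2) * (2 ^ (2 * m + 3) * (∑' k, ((bracket k ^ m)⁻¹) ^ 2) *
            (∑' k, (bracket k ^ m * u k) ^ 2) ^ 2) := by
          gcongr; exact tsum_sq_bracket_pow_mul_correlation_le m u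
      _ ≤ ε ^ 2 * (∑' k, (bracket k ^ m * u k) ^ 2) ^ 2 := by rw [← mul_assoc]; gcongr
  calc ∑' l, v l * correlation u u l
      ≤ ∑' l, (v₀ l * ∑' k, u k ^ 2 + w l * (bracket l ^ m * correlation u u l)) :=
        ENNReal.tsum_le_tsum fun l =>
          calc v l * correlation u u l
              ≤ (v₀ l + w l * bracket l ^ m) * correlation u u l := by gcongr; exact hv l
            _ = v₀ l * correlation u u l + w l * (bracket l ^ m * correlation u u l) := by ring
            _ ≤ _ := by gcongr; exact hcorr l
    _ ≤ _ := by rw [ENNReal.tsum_add, ENNReal.tsum_mul_right]; gcongr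

theorem exists_tsum_mul_correlation_le {m : ℕ} (hm : 1 ≤ m) (v : ℤ → ℝ≥0)
    (hv : ∑' l, ((v l : ℝ≥0∞) / bracket l ^ m) ^ 2 ≠ ∞) {δ : ℝ≥0} (hδ : δ ≠ 0) :
    ∃ c : ℝ≥0, ∀ u : ℤ → ℝ≥0∞, ∑' l, v l * correlation u u l ≤
      δ * ∑' k, ‖k‖ₑ ^ (2 * m) * u k ^ 2 + c * ∑' k, u k ^ 2 := by
  set K := 2 ^ (2 * m + 3) * ∑' k, ((bracket k ^ m)⁻¹) ^ 2
  have hK : K ≠ ∞ := ENNReal.mul_ne_top (by simp) (tsum_inv_bracket_pow_sq_ne_top hm)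
  set ε := (δ : ℝ≥0∞) / 2 ^ (2 * m)
  have hε : ε ^ 2 / K ≠ 0 := by simp [ε, hK, hδ]
  obtain ⟨F, hF⟩ := ENNReal.exists_finset_tsum_indicator_compl_lt hv hε
  refine ⟨∑ l ∈ F, v l + δ, fun u => ?_⟩
  have hsplit : ∀ l, (v l : ℝ≥0∞) ≤ (F : Set ℤ).indicator (fun l => (v l : ℝ≥0∞)) l +
      (F : Set ℤ)ᶜ.indicator (fun l => (v l : ℝ≥0∞) / bracket l ^ m) l * bracket l ^ m := by
    intro l
    by_cases hl : l ∈ F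
    · simp [hl]
    · simp [hl, ENNReal.div_mul_cancel (pow_ne_zero m (bracket_ne_zero l))
        (ENNReal.pow_ne_top (bracket_ne_top l))]
  have hsmall : (∑' l, ((F : Set ℤ)ᶜ.indicator (fun l => (v l : ℝ≥0∞) / bracket l ^ m) l) ^ 2)
      * K ≤ ε ^ 2 := by
    refine ENNReal.mul_le_of_le_div (le_of_eq_of_le ?_ hF.le)
    exact tsum_congr fun l => by by_cases hl : l ∈ F <;> simp [hl]
  calc ∑' l, v l * correlation u u l
      ≤ (∑' l, (F : Set ℤ).indicator (fun l => (v l : ℝ≥0∞)) l) * ∑' k, u k ^ 2 +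
          ε * ∑' k, (bracket k ^ m * u k) ^ 2 := tsum_mul_correlation_le m u hsplit hsmall
    _ ≤ (∑ l ∈ F, (v l : ℝ≥0∞)) * ∑' k, u k ^ 2 +
          ε * (2 ^ (2 * m) * (∑' k, ‖k‖ₑ ^ (2 * m) * u k ^ 2 + ∑' k, u k ^ 2)) := by
        rw [← tsum_subtype, F.tsum_subtype' fun l => (v l : ℝ≥0∞)]
        gcongr
        exact tsum_bracket_pow_mul_sq_le m u
    _ = _ := by
        rw [← mul_assoc, ENNReal.div_mul_cancel (by simp) (by simp)]
        push_cast
        ring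

end Estimates

theorem ofReal_rpow_neg_mul_norm_sq {E : Type*} [SeminormedAddGroup E] (m : ℕ) (k : ℤ) (x : E) :
    ENNReal.ofReal ((1 + |k| : ℝ) ^ (-(2 * m : ℝ)) * ‖x‖ ^ 2) = (‖x‖ₑ / bracket k ^ m) ^ 2 := by
  rw [ENNReal.ofReal_mul (by positivity), ofReal_one_add_abs_rpow, ENNReal.ofReal_pow
    (norm_nonneg x), ofReal_norm, ENNReal.rpow_neg, ← Nat.cast_ofNat, ← Nat.cast_mul,
    ENNReal.rpow_natCast, div_eq_mul_inv, mul_pow, ← ENNReal.inv_pow, ← pow_mul, mul_comm m,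
    mul_comm]

theorem ofReal_rpow_mul_norm_sq {E : Type*} [SeminormedAddGroup E] (m : ℕ) (k : ℤ) (x : E) :
    ENNReal.ofReal ((1 + |k| : ℝ) ^ (2 * m : ℝ) * ‖x‖ ^ 2) = (bracket k ^ m * ‖x‖ₑ) ^ 2 := by
  rw [ENNReal.ofReal_mul (by positivity), ofReal_one_add_abs_rpow, ENNReal.ofReal_pow
    (norm_nonneg x), ofReal_norm, ← Nat.cast_ofNat, ← Nat.cast_mul, ENNReal.rpow_natCast,
    mul_pow, ← pow_mul, mul_comm m]

theorem norm_tsum_le_toReal_of_tsum_enorm_le {ι E : Type*} [NormedAddCommGroup E] {f : ι → E}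
    {B : ℝ≥0∞} (hB : B ≠ ∞) (h : ∑' i, ‖f i‖ₑ ≤ B) : ‖∑' i, f i‖ ≤ B.toReal :=
  (toReal_enorm _).symm.le.trans (ENNReal.toReal_mono hB (enorm_tsum_le_tsum_enorm.trans h))

theorem relative_bound_zero_seq (m : ℕ) (hm : 1 ≤ m) (V : ℤ → ℂ)
    (hV : Summable fun k : ℤ => ((1 + |k| : ℝ)) ^ (-(2 * m : ℝ)) * ‖V k‖ ^ 2) :
    ∀ δ > (0 : ℝ), ∃ c ≥ (0 : ℝ), ∀ u : ℤ → ℂ,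
      (Summable fun k : ℤ => ((1 + |k| : ℝ)) ^ (2 * m : ℝ) * ‖u k‖ ^ 2) →
      ‖∑' p : ℤ × ℤ, V (p.1 - p.2) * u p.2 * (starRingEnd ℂ) (u p.1)‖ ≤
        δ * (∑' k : ℤ, |(k : ℝ)| ^ (2 * m) * ‖u k‖ ^ 2) +
          c * ∑' k : ℤ, ‖u k‖ ^ 2 := by
  intro δ hδ
  have hv : ∑' l, (‖V l‖ₑ / bracket l ^ m) ^ 2 ≠ ∞ := by
    simpa only [ofReal_rpow_neg_mul_norm_sq] using hV.tsum_ofReal_ne_top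
  obtain ⟨c, hc⟩ := exists_tsum_mul_correlation_le hm (fun l => ‖V l‖₊) hv
    (δ := δ.toNNReal) (by simpa using hδ)
  refine ⟨c, c.2, fun u hu => ?_⟩
  have hQ : ∑' k, (bracket k ^ m * ‖u k‖ₑ) ^ 2 ≠ ∞ := by
    simpa only [ofReal_rpow_mul_norm_sq] using hu.tsum_ofReal_ne_top
  have hP := ne_top_of_le_ne_top hQ (tsum_enorm_pow_mul_sq_le m fun k => ‖u k‖ₑ)
  have hU := ne_top_of_le_ne_top hQ (tsum_sq_le_tsum_bracket_pow_mul_sq m fun k => ‖u k‖ₑ)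
  have hbound : ∑' p : ℤ × ℤ, ‖V (p.1 - p.2) * u p.2 * (starRingEnd ℂ) (u p.1)‖ₑ ≤
      δ.toNNReal * ∑' k, ‖k‖ₑ ^ (2 * m) * ‖u k‖ₑ ^ 2 + c * ∑' k, ‖u k‖ₑ ^ 2 := by
    simp only [enorm_mul, RCLike.enorm_conj, mul_assoc]
    exact (tsum_prod_mul_sub_eq_tsum_mul_correlation (fun l => ‖V l‖ₑ) _ _).trans_le (hc _)
  refine (norm_tsum_le_toReal_of_tsum_enorm_le (by finiteness) hbound).trans_eq ?_
  rw [ENNReal.toReal_add (by finiteness) (by finiteness), ENNReal.toReal_mul, ENNReal.toReal_mul,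
    ENNReal.coe_toReal, ENNReal.coe_toReal, Real.coe_toNNReal _ hδ.le,
    ENNReal.tsum_toReal_eq (by finiteness), ENNReal.tsum_toReal_eq (by finiteness)]
  simp [Int.norm_eq_abs]
end
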